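/- Let f : {−1,1}^k → {0,1} be a Boolean function that is not identically zero with ε_0(f) + ρ(f)·k > 0, and let Ψ be an instance of Max-CSP(f). Then val_Ψ ≤ (B_λ(Ψ) + ρ(f)·k) / (ε_0(f) + ρ(f)·k), where λ = (f̂({1}),…,f̂({k})). -/

import Mathlib

/-- Encoding of {-1,1}: `true ↦ 1`, `false ↦ -1`. -/
def pm (b : Bool) : ℝ := if b then 1 else -1

/-- ρ(f) = 2^{-k}·Σ_x f(x). -/
noncomputable def rho (k : ℕ) (f : (Fin k → Bool) → ℝ) : ℝ :=
  (∑ x, f x) / 2 ^ k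

/-- The Chow parameter (degree-1 Fourier coefficient) f̂({i}) = 2^{-k}·Σ_x f(x)·x_i. -/
noncomputable def chow (k : ℕ) (f : (Fin k → Bool) → ℝ) (i : Fin k) : ℝ :=
  (∑ x, f x * pm (x i)) / 2 ^ k

/-- The value of an assignment `σ` on the Max-CSP(f) instance given by
constraints `(jj i, b i)` with weights `w i`. -/
noncomputable def valCSP (k n m : ℕ) (f : (Fin k → Bool) → ℝ)
    (jj : Fin m → Fin k → Fin n) (b : Fin m → Fin k → Bool) (w : Fin m → ℝ)
    (σ : Fin n → Bool) : ℝ :=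
  (1 / (∑ i, w i)) * ∑ i, w i * f (fun t => b i t == σ (jj i t))

/-- The λ-bias B_λ(Ψ) for λ the vector of Chow parameters of f:
Σ_ℓ |(1/W)·Σ_{i,t : j(i)_t = ℓ} λ_t·w_i·b(i)_t|. -/
noncomputable def biasB (k n m : ℕ) (f : (Fin k → Bool) → ℝ)
    (jj : Fin m → Fin k → Fin n) (b : Fin m → Fin k → Bool) (w : Fin m → ℝ) : ℝ :=
  ∑ ℓ : Fin n,
    |(1 / (∑ i, w i)) *
      ∑ i, ∑ t, (if jj i t = ℓ then chow k f t * w i * pm (b i t) else 0)|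

/-! Write λ = (f̂({1}),…,f̂({k})). For every x, `ε * f x - ρ k ≤ ⟨λ, x⟩` with ε = ε₀ + ρ k: on a
satisfying x this is the definition of ε₀, and otherwise it is `|f̂({t})| ≤ ρ`. Averaging over the
constraints bounds `ε * val_Ψ(σ) - ρ k` by the weighted sum of `⟨λ, b(i) ⊙ σ_{j(i)}⟩`, which
regroups by variable into `Σ_ℓ σ_ℓ · bias_λ(Ψ)_ℓ ≤ B_λ(Ψ)`. -/

lemma abs_pm (c : Bool) : |pm c| = 1 := by cases c <;> norm_num [pm]

lemma pm_beq (a c : Bool) : pm (a == c) = pm a * pm c := by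
  cases a <;> cases c <;> norm_num [pm]

section Fourier

variable {k : ℕ} {f : (Fin k → Bool) → ℝ}

lemma abs_chow_le_rho (hf : ∀ x, 0 ≤ f x) (t : Fin k) : |chow k f t| ≤ rho k f := by
  rw [chow, rho, abs_div, abs_of_pos (by positivity : (0 : ℝ) < 2 ^ k)]
  gcongr
  calc |∑ x, f x * pm (x t)| ≤ ∑ x, |f x * pm (x t)| := Finset.abs_sum_le_sum_abs _ _
    _ = ∑ x, f x := by simp only [abs_mul, abs_pm, mul_one, abs_of_nonneg (hf _)]

lemma neg_rho_mul_le_sum_chow_mul_pm (hf : ∀ x, 0 ≤ f x) (x : Fin k → Bool) :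
    -(rho k f * k) ≤ ∑ t, chow k f t * pm (x t) := by
  have hterm (t : Fin k) : -rho k f ≤ chow k f t * pm (x t) := by
    have := neg_abs_le (chow k f t * pm (x t))
    rw [abs_mul, abs_pm, mul_one] at this
    linarith [abs_chow_le_rho hf t]
  calc -(rho k f * k) = ∑ _t : Fin k, -rho k f := by
        simp only [Finset.sum_const, Finset.card_univ, Fintype.card_fin, nsmul_eq_mul]; ring
    _ ≤ _ := Finset.sum_le_sum fun t _ => hterm t

lemma mul_sub_le_sum_chow_mul_pm (hf01 : ∀ x, f x = 0 ∨ f x = 1) {ε₀ : ℝ}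
    (hε₀ : ∀ x, f x = 1 → ε₀ ≤ ∑ t, chow k f t * pm (x t)) (x : Fin k → Bool) :
    (ε₀ + rho k f * k) * f x - rho k f * k ≤ ∑ t, chow k f t * pm (x t) := by
  have hf x : 0 ≤ f x := by rcases hf01 x with h | h <;> simp [h]
  rcases hf01 x with h | h
  · simpa [h] using neg_rho_mul_le_sum_chow_mul_pm hf x
  · simpa [h] using hε₀ x h

end Fourier

/-- The λ-bias vector `bias_λ(Ψ)`. -/
noncomputable def biasVec {k n m : ℕ} (lam : Fin k → ℝ) (jj : Fin m → Fin k → Fin n)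
    (b : Fin m → Fin k → Bool) (w : Fin m → ℝ) (ℓ : Fin n) : ℝ :=
  (1 / (∑ i, w i)) * ∑ i, ∑ t, (if jj i t = ℓ then lam t * w i * pm (b i t) else 0)

section Instance

variable {k n m : ℕ} (jj : Fin m → Fin k → Fin n) (b : Fin m → Fin k → Bool) (w : Fin m → ℝ)

lemma biasB_eq_sum_abs_biasVec (f : (Fin k → Bool) → ℝ) :
    biasB k n m f jj b w = ∑ ℓ, |biasVec (chow k f) jj b w ℓ| := rfl

lemma sum_pm_mul_biasVec (lam : Fin k → ℝ) (σ : Fin n → Bool) :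
    ∑ ℓ, pm (σ ℓ) * biasVec lam jj b w ℓ
      = (1 / ∑ i, w i) * ∑ i, w i * ∑ t, lam t * pm (b i t == σ (jj i t)) := by
  simp only [biasVec, Finset.mul_sum, mul_ite, mul_zero]
  rw [Finset.sum_comm]
  refine Finset.sum_congr rfl fun i _ => ?_
  rw [Finset.sum_comm]
  refine Finset.sum_congr rfl fun t _ => ?_
  rw [Finset.sum_ite_eq, if_pos (Finset.mem_univ _), pm_beq]
  ring

lemma weighted_sum_le_sum_abs_biasVec (lam : Fin k → ℝ) (σ : Fin n → Bool) :
    (1 / ∑ i, w i) * ∑ i, w i * ∑ t, lam t * pm (b i t == σ (jj i t))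
      ≤ ∑ ℓ, |biasVec lam jj b w ℓ| := by
  rw [← sum_pm_mul_biasVec]
  refine Finset.sum_le_sum fun ℓ _ => ?_
  calc pm (σ ℓ) * biasVec lam jj b w ℓ ≤ |pm (σ ℓ) * biasVec lam jj b w ℓ| := le_abs_self _
    _ = |biasVec lam jj b w ℓ| := by rw [abs_mul, abs_pm, one_mul]

lemma mul_valCSP_sub_le {f g : (Fin k → Bool) → ℝ} {c d : ℝ} (h : ∀ x, c * f x - d ≤ g x)
    (hw : ∀ i, 0 ≤ w i) (hW : 0 < ∑ i, w i) (σ : Fin n → Bool) :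
    c * valCSP k n m f jj b w σ - d
      ≤ (1 / ∑ i, w i) * ∑ i, w i * g (fun t => b i t == σ (jj i t)) := by
  have hsum : ∑ i, w i * (c * f (fun t => b i t == σ (jj i t)) - d)
      ≤ ∑ i, w i * g (fun t => b i t == σ (jj i t)) :=
    Finset.sum_le_sum fun i _ => mul_le_mul_of_nonneg_left (h _) (hw i)
  calc c * valCSP k n m f jj b w σ - d
      = (1 / ∑ i, w i) * ∑ i, w i * (c * f (fun t => b i t == σ (jj i t)) - d) := by
        simp only [valCSP, mul_sub, Finset.sum_sub_distrib, ← Finset.sum_mul]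
        field_simp
        simp only [Finset.mul_sum, mul_assoc]
    _ ≤ _ := by gcongr

end Instance

theorem stmt_15_general (k n m : ℕ)
    (f : (Fin k → Bool) → ℝ) (hf01 : ∀ x, f x = 0 ∨ f x = 1)
    (ε₀ : ℝ)
    (hε₀ : IsLeast {r : ℝ | ∃ x : Fin k → Bool, f x = 1 ∧
            r = ∑ i, chow k f i * pm (x i)} ε₀)
    (hpos : 0 < ε₀ + rho k f * k)
    (jj : Fin m → Fin k → Fin n)
    (b : Fin m → Fin k → Bool) (w : Fin m → ℝ) (hw : ∀ i, 0 ≤ w i)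
    (hW : 0 < ∑ i, w i) :
    ∀ σ : Fin n → Bool,
      valCSP k n m f jj b w σ
        ≤ (biasB k n m f jj b w + rho k f * k) / (ε₀ + rho k f * k) := by
  intro σ
  have hlower := mul_valCSP_sub_le jj b w
    (mul_sub_le_sum_chow_mul_pm hf01 fun x hx => hε₀.2 ⟨x, hx, rfl⟩) hw hW σ
  have hupper := weighted_sum_le_sum_abs_biasVec jj b w (chow k f) σ
  rw [le_div_iff₀ hpos, biasB_eq_sum_abs_biasVec]
  linarith

theorem stmt_15 (k n m : ℕ) (hk : 0 < k)
    (f : (Fin k → Bool) → ℝ) (hf01 : ∀ x, f x = 0 ∨ f x = 1)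
    (hfne : ∃ x, f x = 1)
    (ε₀ : ℝ)
    (hε₀ : IsLeast {r : ℝ | ∃ x : Fin k → Bool, f x = 1 ∧
            r = ∑ i, chow k f i * pm (x i)} ε₀)
    (hpos : 0 < ε₀ + rho k f * k)
    (jj : Fin m → Fin k → Fin n) (hjj : ∀ i, Function.Injective (jj i))
    (b : Fin m → Fin k → Bool) (w : Fin m → ℝ) (hw : ∀ i, 0 ≤ w i)
    (hW : 0 < ∑ i, w i) :
    ∀ σ : Fin n → Bool,
      valCSP k n m f jj b w σ
        ≤ (biasB k n m f jj b w + rho k f * k) / (ε₀ + rho k f * k) :=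
  stmt_15_general k n m f hf01 ε₀ hε₀ hpos jj b w hw hW
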